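/- arXiv:2403.09389 — 2 statements merged into one kernel-verified Lean document; each statement's English description precedes it below -/
import Mathlib

section
/- Let f be β-smooth, 0 < η < 1/β, and choose ε > 1/(2η(1−βη)) so that ρ := 2ηε(1−βη) − 1 > 0. If x_{t+1} = x_t − η∇f(x_t) + v_t, then for every T ∈ ℕ: ∑_{t=0}^{T} |∇f(x_t)|² ≤ (2ε/ρ)(f(x_0) − inf f) + (ε/ρ)(ε + 2β) ∑_{t=0}^{T} |v_t|². -/
/-!
The descent lemma `f y ≤ f x + ⟪∇f x, y - x⟫ + β/2 ‖y - x‖²` at the perturbed step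
`y = x - η ∇f x + v`, with Young's inequality `⟪∇f x, v⟫ ≤ ‖∇f x‖² / (2ε) + ε/2 ‖v‖²` absorbing
the cross term, gives the sufficient decrease
`ρ/(2ε) ‖∇f x_t‖² ≤ f x_t - f x_{t+1} + (ε/2 + β) ‖v_t‖²`.
Summing over `t`, the values of `f` telescope and the last one is at least `inf f`.
-/

open Finset InnerProductSpace

section

variable {E : Type*} [NormedAddCommGroup E] [InnerProductSpace ℝ E]

theorem real_inner_le_norm_sq_div_add_mul_norm_sq {ε : ℝ} (hε : 0 < ε) (a b : E) :
    ⟪a, b⟫_ℝ ≤ ‖a‖ ^ 2 / (2 * ε) + ε / 2 * ‖b‖ ^ 2 := by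
  have h := norm_sub_sq_real a (ε • b)
  rw [real_inner_smul_right, norm_smul, Real.norm_of_nonneg hε.le] at h
  rw [div_add' _ _ _ (by positivity), le_div_iff₀ (by positivity)]
  nlinarith [sq_nonneg ‖a - ε • b‖]

variable [CompleteSpace E] {f : E → ℝ} {β : ℝ}

theorem hasDerivAt_comp_add_smul {x v : E} {t : ℝ} (hf : DifferentiableAt ℝ f (x + t • v)) :
    HasDerivAt (fun s : ℝ => f (x + s • v)) ⟪gradient f (x + t • v), v⟫_ℝ t := by
  have hline : HasDerivAt (fun s : ℝ => x + s • v) v t := by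
    simpa using ((hasDerivAt_id t).smul_const v).const_add x
  simpa [Function.comp_def] using hf.hasGradientAt.hasFDerivAt.comp_hasDerivAt t hline

theorem le_add_inner_gradient_add_norm_sq (hf : Differentiable ℝ f)
    (hlip : ∀ x y, ‖gradient f x - gradient f y‖ ≤ β * ‖x - y‖) (x y : E) :
    f y ≤ f x + ⟪gradient f x, y - x⟫_ℝ + β / 2 * ‖y - x‖ ^ 2 := by
  set u := y - x
  have hφ : ∀ t : ℝ, HasDerivAt (fun s : ℝ => f (x + s • u) - s * ⟪gradient f x, u⟫_ℝ)
      (⟪gradient f (x + t • u), u⟫_ℝ - ⟪gradient f x, u⟫_ℝ) t := fun t =>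
    (hasDerivAt_comp_add_smul (hf _)).fun_sub (hasDerivAt_mul_const _)
  have hbound : ∀ t : ℝ, HasDerivAt (fun s : ℝ => f x + β / 2 * ‖u‖ ^ 2 * s ^ 2)
      (β * ‖u‖ ^ 2 * t) t := fun t =>
    (((hasDerivAt_pow 2 t).const_mul (β / 2 * ‖u‖ ^ 2)).const_add (f x)).congr_deriv (by ring)
  -- Comparison principle on `[0, 1]`: the derivative gap `⟪∇f (x + t • u) - ∇f x, u⟫` is at most
  -- `β t ‖u‖²` by Cauchy–Schwarz and the Lipschitz bound.
  have hcmp := image_le_of_deriv_right_le_deriv_boundary (a := 0) (b := 1)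
    (fun t _ => (hφ t).continuousAt.continuousWithinAt)
    (fun t _ => (hφ t).hasDerivWithinAt) (by simp)
    (fun t _ => (hbound t).continuousAt.continuousWithinAt)
    (fun t _ => (hbound t).hasDerivWithinAt) (fun t ht => by
      rw [← inner_sub_left]
      calc ⟪gradient f (x + t • u) - gradient f x, u⟫_ℝ
          ≤ ‖gradient f (x + t • u) - gradient f x‖ * ‖u‖ := real_inner_le_norm _ _
        _ ≤ β * ‖t • u‖ * ‖u‖ := by
          gcongr
          simpa using hlip (x + t • u) x
        _ = β * ‖u‖ ^ 2 * t := by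
          rw [norm_smul, Real.norm_of_nonneg ht.1]; ring)
    (Set.right_mem_Icc.2 zero_le_one)
  simp only [one_smul, one_mul, one_pow, mul_one, u, add_sub_cancel] at hcmp
  linarith

theorem perturbed_gradient_step_sufficient_decrease (hf : Differentiable ℝ f)
    (hlip : ∀ x y, ‖gradient f x - gradient f y‖ ≤ β * ‖x - y‖) {η ε : ℝ} (hβ : 0 ≤ β)
    (hη : 0 ≤ η) (hβη : β * η ≤ 1) (hε : 0 < ε) (x v : E) :
    (2 * η * ε * (1 - β * η) - 1) / (2 * ε) * ‖gradient f x‖ ^ 2 ≤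
      f x - f (x - η • gradient f x + v) + (ε / 2 + β) * ‖v‖ ^ 2 := by
  have hdesc := le_add_inner_gradient_add_norm_sq hf hlip x (x - η • gradient f x + v)
  rw [show x - η • gradient f x + v - x = v - η • gradient f x by abel, norm_sub_sq_real,
    inner_sub_right, real_inner_smul_right, real_inner_smul_right, real_inner_self_eq_norm_sq,
    norm_smul, Real.norm_of_nonneg hη, real_inner_comm (gradient f x) v] at hdesc
  have hcoef : (2 * η * ε * (1 - β * η) - 1) / (2 * ε) = η * (1 - β * η) - 1 / (2 * ε) := by
    field_simp
  rw [hcoef]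
  -- Young's inequality applies to the cross term because `0 ≤ 1 - βη ≤ 1`.
  have hcross : (1 - β * η) * ⟪gradient f x, v⟫_ℝ ≤
      ‖gradient f x‖ ^ 2 / (2 * ε) + ε / 2 * ‖v‖ ^ 2 := by
    have hyoung := real_inner_le_norm_sq_div_add_mul_norm_sq hε (gradient f x) v
    have hrhs : 0 ≤ ‖gradient f x‖ ^ 2 / (2 * ε) + ε / 2 * ‖v‖ ^ 2 := by positivity
    nlinarith [mul_nonneg hβ hη]
  have hslack : 0 ≤ β * η ^ 2 * ‖gradient f x‖ ^ 2 + β * ‖v‖ ^ 2 := by positivity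
  linear_combination hdesc + hcross + hslack / 2

end

theorem sum_range_le_sub_add_sum_of_le_sub_succ {u a b : ℕ → ℝ} {m : ℝ} (hm : ∀ t, m ≤ u t)
    (h : ∀ t, a t ≤ u t - u (t + 1) + b t) (n : ℕ) :
    ∑ t ∈ range n, a t ≤ u 0 - m + ∑ t ∈ range n, b t := by
  calc ∑ t ∈ range n, a t ≤ ∑ t ∈ range n, (u t - u (t + 1) + b t) := sum_le_sum fun t _ => h t
    _ = u 0 - u n + ∑ t ∈ range n, b t := by rw [sum_add_distrib, sum_range_sub']
    _ ≤ u 0 - m + ∑ t ∈ range n, b t := by linarith [hm n]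

theorem stmt_4_general {d : ℕ} (f : EuclideanSpace ℝ (Fin d) → ℝ) (β η ε ρ : ℝ)
    (hf : Differentiable ℝ f)
    (hlip : ∀ x y, ‖gradient f x - gradient f y‖ ≤ β * ‖x - y‖)
    (hbdd : BddBelow (Set.range f))
    (hη0 : 0 < η) (hηβ : η < 1 / β)
    (hε : ε > 1 / (2 * η * (1 - β * η)))
    (hρ : ρ = 2 * η * ε * (1 - β * η) - 1)
    (v x : ℕ → EuclideanSpace ℝ (Fin d))
    (hx : ∀ t, x (t + 1) = x t - η • gradient f (x t) + v t) (T : ℕ) :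
    ∑ t ∈ Finset.range (T + 1), ‖gradient f (x t)‖ ^ 2 ≤
      (2 * ε / ρ) * (f (x 0) - sInf (Set.range f))
        + (ε / ρ) * (ε + 2 * β) * ∑ t ∈ Finset.range (T + 1), ‖v t‖ ^ 2 := by
  have hβ : 0 < β := one_div_pos.mp (hη0.trans hηβ)
  have hβη : β * η < 1 := by rwa [lt_div_iff₀ hβ, mul_comm] at hηβ
  have hden : 0 < 2 * η * (1 - β * η) := mul_pos (by positivity) (sub_pos.2 hβη)
  have hε0 : 0 < ε := (one_div_pos.2 hden).trans hε
  have hρ0 : 0 < ρ := by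
    have := (div_lt_iff₀ hden).1 hε
    linarith
  have hsum : ρ / (2 * ε) * ∑ t ∈ range (T + 1), ‖gradient f (x t)‖ ^ 2 ≤
      f (x 0) - sInf (Set.range f) + (ε / 2 + β) * ∑ t ∈ range (T + 1), ‖v t‖ ^ 2 := by
    rw [mul_sum, mul_sum]
    refine sum_range_le_sub_add_sum_of_le_sub_succ (fun t => csInf_le hbdd ⟨x t, rfl⟩)
      (fun t => ?_) _
    rw [hρ, hx]
    exact perturbed_gradient_step_sufficient_decrease hf hlip hβ.le hη0.le hβη.le hε0 _ _
  calc ∑ t ∈ range (T + 1), ‖gradient f (x t)‖ ^ 2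
      = 2 * ε / ρ * (ρ / (2 * ε) * ∑ t ∈ range (T + 1), ‖gradient f (x t)‖ ^ 2) := by
        field_simp
    _ ≤ 2 * ε / ρ *
          (f (x 0) - sInf (Set.range f) + (ε / 2 + β) * ∑ t ∈ range (T + 1), ‖v t‖ ^ 2) := by
        gcongr
    _ = _ := by ring

theorem stmt_4 {d : ℕ} (f : EuclideanSpace ℝ (Fin d) → ℝ) (β η ε ρ : ℝ) (hβ : 0 < β)
    (hf : Differentiable ℝ f)
    (hlip : ∀ x y, ‖gradient f x - gradient f y‖ ≤ β * ‖x - y‖)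
    (hbdd : BddBelow (Set.range f))
    (hη0 : 0 < η) (hηβ : η < 1 / β)
    (hε : ε > 1 / (2 * η * (1 - β * η)))
    (hρ : ρ = 2 * η * ε * (1 - β * η) - 1)
    (v x : ℕ → EuclideanSpace ℝ (Fin d))
    (hx : ∀ t, x (t + 1) = x t - η • gradient f (x t) + v t) (T : ℕ) :
    ∑ t ∈ Finset.range (T + 1), ‖gradient f (x t)‖ ^ 2 ≤
      (2 * ε / ρ) * (f (x 0) - sInf (Set.range f))
        + (ε / ρ) * (ε + 2 * β) * ∑ t ∈ Finset.range (T + 1), ‖v t‖ ^ 2 :=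
  stmt_4_general f β η ε ρ hf hlip hbdd hη0 hηβ hε hρ v x hx T
end

section
/- Robbins–Monro-type reduction: if the aggregated cycle iteration has the form y_{k+1} = y_k − η_k(∇f(y_k) + e_k) with |e_k| ≤ η_k(P + Q|∇f(y_k)|) for constants P, Q ≥ 0, f is β-smooth and bounded below, η_k > 0, ∑η_k = ∞, ∑η_k² < ∞, then liminf_{k→∞} |∇f(y_k)| = 0 and moreover ∇f(y_k) → 0. -/
/-!
Along the iteration, `f (y k)` decreases by `η k * ‖∇f (y k)‖²` up to an error of order
`η k ^ 2 * (1 + ‖∇f (y k)‖²)` (descent lemma), so boundedness of `f` from below and `∑ η k ^ 2 < ∞`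
give `∑ η k * ‖∇f (y k)‖² < ∞`; with `∑ η k = ∞` the gradient norms come arbitrarily close to `0`
infinitely often. They cannot then climb back to `ε`: while `‖∇f (y k)‖ ∈ [ε / 2, ε]`, the
Lipschitz bound makes each increase of `‖∇f (y k)‖` at most a constant times the term
`η k * ‖∇f (y k)‖²` of the convergent series, so once its tail and `η k` are small, a dip below
`ε / 2` keeps the gradient norms below `3 ε / 4` forever.
-/

open Filter Topology

theorem tendsto_zero_of_summable_sq {u : ℕ → ℝ} (hu : Summable fun k => u k ^ 2) :
    Tendsto u atTop (𝓝 0) := by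
  have h := hu.tendsto_atTop_zero.sqrt
  simp only [Real.sqrt_sq_eq_abs, Real.sqrt_zero] at h
  exact (tendsto_zero_iff_abs_tendsto_zero u).2 h

theorem summable_mul_of_le_sub_mul_add {u η b : ℕ → ℝ} {C : ℝ} (hu : BddBelow (Set.range u))
    (hη : ∀ k, 0 ≤ η k) (hηsq : Summable fun k => η k ^ 2) (hb : ∀ k, 0 ≤ b k) (hC : 0 ≤ C)
    (hstep : ∀ k, u (k + 1) ≤ u k - η k * b k + C * η k ^ 2 * (1 + b k)) :
    Summable fun k => η k * b k := by
  obtain ⟨B, hB⟩ := hu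
  obtain ⟨N, hN⟩ := eventually_atTop.1 <|
    ((tendsto_zero_of_summable_sq hηsq).const_mul C).eventually_le_const
      (show C * 0 < 1 / 2 by norm_num)
  have hhalf : ∀ k, η (k + N) * b (k + N) ≤
      2 * (u (k + N) - u (k + 1 + N)) + 2 * C * η (k + N) ^ 2 := by
    intro k
    have h := hstep (k + N)
    rw [add_right_comm] at h
    nlinarith [mul_le_mul_of_nonneg_right (hN (k + N) (Nat.le_add_left N k))
      (mul_nonneg (hη (k + N)) (hb (k + N)))]
  have hηsq' : Summable fun k => η (k + N) ^ 2 := (summable_nat_add_iff N).2 hηsq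
  refine (summable_nat_add_iff N).1 <| summable_of_sum_range_le
    (c := 2 * (u N - B) + 2 * C * ∑' k, η (k + N) ^ 2) (fun k => mul_nonneg (hη _) (hb _))
    fun n => ?_
  have htel := Finset.sum_range_sub' (fun k => u (k + N)) n
  have hsq := hηsq'.sum_le_tsum (Finset.range n) fun k _ => sq_nonneg (η (k + N))
  have hlow : B ≤ u (n + N) := hB ⟨_, rfl⟩
  calc ∑ k ∈ Finset.range n, η (k + N) * b (k + N)
      ≤ ∑ k ∈ Finset.range n, (2 * (u (k + N) - u (k + 1 + N)) + 2 * C * η (k + N) ^ 2) :=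
        Finset.sum_le_sum fun k _ => hhalf k
    _ = 2 * (u N - u (n + N)) + 2 * C * ∑ k ∈ Finset.range n, η (k + N) ^ 2 := by
        simp only [Finset.sum_add_distrib, ← Finset.mul_sum, htel, zero_add]
    _ ≤ 2 * (u N - B) + 2 * C * ∑' k, η (k + N) ^ 2 := by gcongr

theorem frequently_lt_of_summable_mul {η b : ℕ → ℝ} (hη : ∀ k, 0 ≤ η k) (hdiv : ¬Summable η)
    (hsum : Summable fun k => η k * b k) {r : ℝ} (hr : 0 < r) : ∃ᶠ k in atTop, b k < r := by
  refine fun hge => hdiv <| (hsum.mul_left r⁻¹).of_norm_bounded_eventually_nat ?_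
  filter_upwards [hge] with k hk
  rw [Real.norm_of_nonneg (hη k), le_inv_mul_iff₀ hr, mul_comm]
  exact mul_le_mul_of_nonneg_left (not_lt.1 hk) (hη k)

theorem tendsto_zero_of_summable_mul_sq {η a : ℕ → ℝ} {c : ℝ} (hη : ∀ k, 0 ≤ η k)
    (hdiv : ¬Summable η) (hη0 : Tendsto η atTop (𝓝 0)) (ha : ∀ k, 0 ≤ a k) (hc : 0 ≤ c)
    (hsum : Summable fun k => η k * a k ^ 2)
    (hinc : ∀ k, a (k + 1) - a k ≤ c * η k * (1 + a k)) :
    Tendsto a atTop (𝓝 0) := by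
  refine tendsto_order.2 ⟨fun r hr => .of_forall fun k => hr.trans_le (ha k), fun ε hε => ?_⟩
  set w := fun k => η k * a k ^ 2
  set D := c * (1 + ε) * (4 / ε ^ 2)
  have hD : 0 ≤ D := by positivity
  have hstep : ∀ n, a n ≤ ε → a (n + 1) - a n ≤ c * (1 + ε) * η n := fun n hn =>
    (hinc n).trans (by nlinarith [mul_le_mul_of_nonneg_left hn (mul_nonneg hc (hη n))])
  have hdecr : ∀ n, ε / 2 ≤ a n → c * (1 + ε) * η n ≤ D * w n := fun n hn => by
    have : 1 ≤ 4 / ε ^ 2 * a n ^ 2 := by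
      rw [div_mul_eq_mul_div, le_div_iff₀ (by positivity)]; nlinarith
    calc c * (1 + ε) * η n ≤ c * (1 + ε) * η n * (4 / ε ^ 2 * a n ^ 2) :=
          le_mul_of_one_le_right (by have := hη n; positivity) this
      _ = D * w n := by ring
  set T := fun n => ∑' k, w (k + n)
  have hT : ∀ n, T n = w n + T (n + 1) := fun n => by
    simpa [T, add_assoc, add_comm 1] using ((summable_nat_add_iff n).2 hsum).tsum_eq_zero_add
  have hT0 : ∀ n, 0 ≤ T n := fun n => tsum_nonneg fun k => mul_nonneg (hη _) (sq_nonneg _)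
  obtain ⟨K, hK⟩ := eventually_atTop.1 <|
    (((hη0.const_mul (c * (1 + ε))).eventually_le_const (show c * (1 + ε) * 0 < ε / 8 by
      simp; positivity)).and
    (((tendsto_sum_nat_add w).const_mul D).eventually_le_const (show D * 0 < ε / 8 by
      simp; positivity)))
  obtain ⟨m, ham, hmK⟩ := ((frequently_lt_of_summable_mul hη hdiv hsum
    (show 0 < (ε / 2) ^ 2 by positivity)).and_eventually (eventually_ge_atTop K)).exists
  replace ham : a m < ε / 2 := lt_of_pow_lt_pow_left₀ 2 (by positivity) ham
  -- `a n + D * T n` grows by at most `ε / 4` on a step starting below `ε / 2`,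
  -- and does not grow on a step starting in `[ε / 2, ε]`
  have hV : ∀ n ≥ m, a n + D * T n ≤ 3 * ε / 4 := by
    intro n hn
    induction n, hn using Nat.le_induction with
    | base => linarith [(hK m hmK).2]
    | succ n hmn ih =>
      have han : a n ≤ ε := by nlinarith [hT0 n]
      have hηn := (hK n (hmK.trans hmn)).1
      have hTn1 := (hK (n + 1) (by omega)).2
      have := hstep n han
      rcases lt_or_ge (a n) (ε / 2) with hlow | hhigh
      · linarith
      · have := hdecr n hhigh
        rw [hT n] at ih
        linarith
  filter_upwards [eventually_ge_atTop m] with n hn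
  nlinarith [hV n hn, hT0 n]

theorem norm_add_le_mul_one_add_norm {E : Type*} [SeminormedAddCommGroup E] {P Q M t : ℝ}
    (hP : 0 ≤ P) (hQ : 0 ≤ Q) (ht : 0 ≤ t) (htM : t ≤ M) {g e : E}
    (he : ‖e‖ ≤ t * (P + Q * ‖g‖)) :
    ‖g + e‖ ≤ (1 + M * (P + Q)) * (1 + ‖g‖) := by
  have hg := norm_nonneg g
  have : t * (P + Q * ‖g‖) ≤ M * (P + Q * ‖g‖) := by gcongr
  nlinarith [norm_add_le g e, mul_nonneg (ht.trans htM) (mul_nonneg hP hg),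
    mul_nonneg (ht.trans htM) hQ]

section GradientStep

variable {E : Type*} [NormedAddCommGroup E] [InnerProductSpace ℝ E] [CompleteSpace E]
  {f : E → ℝ} {β P Q M t : ℝ}

noncomputable def gradientStep (f : E → ℝ) (t : ℝ) (e x : E) : E := x - t • (gradient f x + e)

theorem le_add_inner_gradient_add_sq (hf : Differentiable ℝ f)
    (hlip : ∀ x y, ‖gradient f x - gradient f y‖ ≤ β * ‖x - y‖) (x v : E) :
    f (x + v) ≤ f x + inner ℝ (gradient f x) v + β / 2 * ‖v‖ ^ 2 := by
  set ψ : ℝ → ℝ := fun t =>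
    f (x + t • v) - t * inner ℝ (gradient f x) v - β / 2 * t ^ 2 * ‖v‖ ^ 2
  have hψ : ∀ t, HasDerivAt ψ
      (inner ℝ (gradient f (x + t • v) - gradient f x) v - β * t * ‖v‖ ^ 2) t := by
    intro t
    have hline : HasDerivAt (fun s : ℝ => x + s • v) v t := by
      simpa using ((hasDerivAt_id t).smul_const v).const_add x
    have hf' := (hf (x + t • v)).hasFDerivAt.comp_hasDerivAt t hline
    rw [← inner_gradient_left] at hf'
    refine ((hf'.sub ((hasDerivAt_id t).mul_const (inner ℝ (gradient f x) v))).sub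
      (((hasDerivAt_pow 2 t).const_mul (β / 2)).mul_const (‖v‖ ^ 2))).congr_deriv ?_
    simp only [inner_sub_left, Nat.cast_ofNat]
    ring
  have hanti : AntitoneOn ψ (Set.Ici 0) := by
    refine antitoneOn_of_hasDerivWithinAt_nonpos (convex_Ici 0)
      (fun t _ => (hψ t).continuousAt.continuousWithinAt) (fun t _ => (hψ t).hasDerivWithinAt)
      fun t ht => ?_
    rw [interior_Ici, Set.mem_Ioi] at ht
    have := (real_inner_le_norm _ _).trans
      (mul_le_mul_of_nonneg_right (hlip (x + t • v) x) (norm_nonneg v))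
    rw [add_sub_cancel_left, norm_smul, Real.norm_of_nonneg ht.le] at this
    linarith
  have := hanti Set.self_mem_Ici (Set.mem_Ici.2 zero_le_one) zero_le_one
  simp only [ψ, zero_smul, add_zero, one_smul, zero_mul, one_mul, sub_zero, one_pow, ne_eq,
    OfNat.ofNat_ne_zero, not_false_eq_true, zero_pow, mul_zero] at this
  linarith

theorem norm_gradient_gradientStep_sub_le (hβ : 0 ≤ β)
    (hlip : ∀ x y, ‖gradient f x - gradient f y‖ ≤ β * ‖x - y‖) (hP : 0 ≤ P) (hQ : 0 ≤ Q)
    (ht : 0 ≤ t) (htM : t ≤ M) {x e : E} (he : ‖e‖ ≤ t * (P + Q * ‖gradient f x‖)) :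
    ‖gradient f (gradientStep f t e x)‖ - ‖gradient f x‖ ≤
      β * (1 + M * (P + Q)) * t * (1 + ‖gradient f x‖) := by
  calc ‖gradient f (gradientStep f t e x)‖ - ‖gradient f x‖
      ≤ β * ‖x - t • (gradient f x + e) - x‖ := (norm_sub_norm_le _ _).trans (hlip _ _)
    _ = β * (t * ‖gradient f x + e‖) := by
        rw [sub_sub_cancel_left, norm_neg, norm_smul, Real.norm_of_nonneg ht]
    _ ≤ β * (t * ((1 + M * (P + Q)) * (1 + ‖gradient f x‖))) := by
        gcongr; exact norm_add_le_mul_one_add_norm hP hQ ht htM he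
    _ = β * (1 + M * (P + Q)) * t * (1 + ‖gradient f x‖) := by ring

theorem apply_gradientStep_le (hf : Differentiable ℝ f) (hβ : 0 ≤ β)
    (hlip : ∀ x y, ‖gradient f x - gradient f y‖ ≤ β * ‖x - y‖) (hP : 0 ≤ P) (hQ : 0 ≤ Q)
    (ht : 0 ≤ t) (htM : t ≤ M) {x e : E} (he : ‖e‖ ≤ t * (P + Q * ‖gradient f x‖)) :
    f (gradientStep f t e x) ≤ f x - t * ‖gradient f x‖ ^ 2 +
      (P + Q + β * (1 + M * (P + Q)) ^ 2) * t ^ 2 * (1 + ‖gradient f x‖ ^ 2) := by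
  set g := gradient f x
  set a := ‖g‖
  set L := 1 + M * (P + Q)
  have ha : 0 ≤ a := norm_nonneg g
  have hdesc := le_add_inner_gradient_add_sq hf hlip x (-(t • (g + e)))
  rw [← sub_eq_add_neg, ← gradientStep, inner_neg_right, inner_smul_right, inner_add_right,
    real_inner_self_eq_norm_sq, norm_neg, norm_smul, Real.norm_of_nonneg ht] at hdesc
  have herr : t * -inner ℝ g e ≤ (P + Q) * t ^ 2 * (1 + a ^ 2) := by
    have h1 : -inner ℝ g e ≤ a * (t * (P + Q * a)) :=
      (neg_le_abs _).trans ((abs_real_inner_le_norm g e).trans (by gcongr))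
    have h2 : a * (P + Q * a) ≤ (P + Q) * (1 + a ^ 2) := by
      nlinarith [sq_nonneg (a - 1), mul_nonneg hP (sq_nonneg (a - 1))]
    nlinarith [mul_le_mul_of_nonneg_left h1 ht, mul_le_mul_of_nonneg_left h2 (sq_nonneg t)]
  have hquad : β / 2 * (t * ‖g + e‖) ^ 2 ≤ β * L ^ 2 * t ^ 2 * (1 + a ^ 2) := by
    have hd : t * ‖g + e‖ ≤ t * (L * (1 + a)) :=
      mul_le_mul_of_nonneg_left (norm_add_le_mul_one_add_norm hP hQ ht htM he) ht
    have hsq : (t * ‖g + e‖) ^ 2 ≤ (t * (L * (1 + a))) ^ 2 := by gcongr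
    nlinarith [mul_le_mul_of_nonneg_left hsq hβ,
      mul_nonneg hβ (mul_nonneg (sq_nonneg (t * L)) (sq_nonneg (1 - a)))]
  linarith

end GradientStep

theorem stmt_15 {d : ℕ} (f : EuclideanSpace ℝ (Fin d) → ℝ) (β P Q : ℝ)
    (hβ : 0 < β) (hP : 0 ≤ P) (hQ : 0 ≤ Q)
    (hf : Differentiable ℝ f)
    (hlip : ∀ x y, ‖gradient f x - gradient f y‖ ≤ β * ‖x - y‖)
    (hbdd : BddBelow (Set.range f))
    (η : ℕ → ℝ) (hηpos : ∀ k, 0 < η k)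
    (hηdiv : Tendsto (fun n => ∑ k ∈ Finset.range n, η k) atTop atTop)
    (hηsq : Summable (fun k => (η k) ^ 2))
    (e y : ℕ → EuclideanSpace ℝ (Fin d))
    (he : ∀ k, ‖e k‖ ≤ η k * (P + Q * ‖gradient f (y k)‖))
    (hy : ∀ k, y (k + 1) = y k - η k • (gradient f (y k) + e k)) :
    Filter.atTop.liminf (fun k => ‖gradient f (y k)‖) = 0 ∧
      Tendsto (fun k => gradient f (y k)) atTop (nhds 0) := by
  have hη k : 0 ≤ η k := (hηpos k).le
  have hη0 := tendsto_zero_of_summable_sq hηsq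
  obtain ⟨M, hM⟩ := hη0.bddAbove_range
  have hηM k : η k ≤ M := hM ⟨k, rfl⟩
  have hM0 : 0 ≤ M := (hη 0).trans (hηM 0)
  set a := fun k => ‖gradient f (y k)‖
  have hinc k : a (k + 1) - a k ≤ β * (1 + M * (P + Q)) * η k * (1 + a k) := by
    simp only [a, hy k]
    exact norm_gradient_gradientStep_sub_le hβ.le hlip hP hQ (hη k) (hηM k) (he k)
  have hdesc k : f (y (k + 1)) ≤ f (y k) - η k * a k ^ 2 +
      (P + Q + β * (1 + M * (P + Q)) ^ 2) * η k ^ 2 * (1 + a k ^ 2) := by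
    simp only [a, hy k]
    exact apply_gradientStep_le hf hβ.le hlip hP hQ (hη k) (hηM k) (he k)
  have hsum := summable_mul_of_le_sub_mul_add (hbdd.mono (Set.range_comp_subset_range y f))
    hη hηsq (fun k => sq_nonneg (a k)) (by positivity) hdesc
  have hdiv : ¬Summable η := by rwa [not_summable_iff_tendsto_nat_atTop_of_nonneg hη]
  have ha : Tendsto a atTop (𝓝 0) := tendsto_zero_of_summable_mul_sq hη hdiv hη0
    (fun k => norm_nonneg _) (by positivity) hsum hinc
  exact ⟨ha.liminf_eq, tendsto_zero_iff_norm_tendsto_zero.2 ha⟩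
end
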